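/- arXiv:1605.07151 — 2 statements merged into one kernel-verified Lean document; each statement's English description precedes it below -/
import Mathlib

section
/- Let the edges of an n×n grid (2n(n+1) edges) be colored i.i.d. uniformly from q ≥ 2 colors, and let IMG be the equivalence class of the coloring under rotations of the board by multiples of 90°. Then the Shannon entropy of IMG equals 2n(n+1)·log₂ q − 2 + q^{-n(n+1)} + q^{-3n(n+1)/2}. -/
lemma fixed_count {α : Type*} [Fintype α] [DecidableEq α] (σ : Equiv.Perm α) (m q : ℕ)
    (hm : 0 < m) (hσ : σ ^ m = 1)
    (hfree : ∀ (x : α) (j : ℕ), 0 < j → j < m → (σ ^ j) x ≠ x) :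
    ∃ t, Fintype.card α = m * t ∧
      Nat.card {c : α → Fin q // c ∘ ⇑σ = c} = q ^ t := by
  classical
  have hpowmod : ∀ k : ℕ, σ ^ k = σ ^ (k % m) := by
    intro k
    conv_lhs => rw [← Nat.div_add_mod k m]
    rw [pow_add, pow_mul, hσ, one_pow, one_mul]
  have requiv : Equivalence (fun x y : α => ∃ k : ℕ, y = (σ ^ k) x) := by
    constructor
    · intro x; exact ⟨0, by simp⟩
    · rintro x y ⟨k, rfl⟩
      refine ⟨m - k % m, ?_⟩
      have : (σ ^ (m - k % m)) ((σ ^ k) x) = x := by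
        rw [hpowmod k, ← Equiv.Perm.mul_apply, ← pow_add,
          Nat.sub_add_cancel (Nat.mod_lt k hm).le, hσ, Equiv.Perm.one_apply]
      exact this.symm
    · rintro x y z ⟨k, rfl⟩ ⟨l, rfl⟩
      exact ⟨l + k, by rw [← Equiv.Perm.mul_apply, ← pow_add]⟩
  let r : Setoid α := ⟨fun x y => ∃ k : ℕ, y = (σ ^ k) x, requiv⟩
  refine ⟨Fintype.card (Quotient r), ?_, ?_⟩
  · have h1 : (Finset.univ : Finset α).card
        = ∑ b : Quotient r, (Finset.univ.filter fun x => Quotient.mk r x = b).card :=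
      Finset.card_eq_sum_card_fiberwise (fun x _ => Finset.mem_univ _)
    have h2 : ∀ b : Quotient r,
        (Finset.univ.filter fun x => Quotient.mk r x = b).card = m := by
      refine Quotient.ind (fun x₀ => ?_)
      have hset : (Finset.univ.filter fun x => Quotient.mk r x = Quotient.mk r x₀)
          = (Finset.range m).image (fun k => (σ ^ k) x₀) := by
        ext x
        simp only [Finset.mem_filter, Finset.mem_univ, true_and, Finset.mem_image,
          Finset.mem_range]
        constructor
        · intro h
          have hx : ∃ k : ℕ, x₀ = (σ ^ k) x := Quotient.exact h
          obtain ⟨k, hk⟩ := hx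
          have := requiv.symm ⟨k, hk⟩
          obtain ⟨l, hl⟩ := this
          exact ⟨l % m, Nat.mod_lt l hm, by rw [← hpowmod l, ← hl]⟩
        · rintro ⟨k, hk, rfl⟩
          exact Quotient.sound (requiv.symm ⟨k, rfl⟩)
      rw [hset, Finset.card_image_of_injOn, Finset.card_range]
      intro i hi j hj hij
      simp only [Finset.mem_coe, Finset.mem_range] at hi hj
      simp only [] at hij
      by_contra hne
      rcases Nat.lt_or_ge i j with h | h
      · have : (σ ^ (j - i)) ((σ ^ i) x₀) = (σ ^ i) x₀ := by
          rw [← Equiv.Perm.mul_apply, ← pow_add, Nat.sub_add_cancel h.le]; exact hij.symm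
        exact hfree _ (j - i) (by omega) (by omega) this
      · have hlt : j < i := by omega
        have : (σ ^ (i - j)) ((σ ^ j) x₀) = (σ ^ j) x₀ := by
          rw [← Equiv.Perm.mul_apply, ← pow_add, Nat.sub_add_cancel hlt.le]; exact hij
        exact hfree _ (i - j) (by omega) (by omega) this
    rw [Finset.card_univ] at h1
    rw [h1, Finset.sum_congr rfl (fun b _ => h2 b), Finset.sum_const, Finset.card_univ,
      smul_eq_mul, mul_comm]
  · have const_on : ∀ (c : α → Fin q), c ∘ ⇑σ = c → ∀ (k : ℕ) (x : α),
        c ((σ ^ k) x) = c x := by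
      intro c hc k
      induction k with
      | zero => simp
      | succ k ih =>
        intro x
        have h1 : (σ ^ (k + 1)) x = (σ ^ k) (σ x) := by
          rw [pow_succ, Equiv.Perm.mul_apply]
        rw [h1, ih (σ x)]; exact congrFun hc x
    let e : {c : α → Fin q // c ∘ ⇑σ = c} ≃ (Quotient r → Fin q) :=
      { toFun := fun c => Quotient.lift c.1 (by
          rintro x y ⟨k, rfl⟩
          exact (const_on c.1 c.2 k x).symm)
        invFun := fun f => ⟨f ∘ Quotient.mk r, by
          funext x
          have hr : Quotient.mk r x = Quotient.mk r (σ x) :=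
            Quotient.sound ⟨1, by rw [pow_one]⟩
          exact (congrArg f hr).symm⟩
        left_inv := fun c => Subtype.ext rfl
        right_inv := fun f => funext (Quotient.ind fun x => rfl) }
    rw [Nat.card_congr e, Nat.card_fun, Nat.card_eq_fintype_card, Nat.card_eq_fintype_card,
      Fintype.card_fin]

lemma orbit_card {α β : Type*} [Fintype α] [DecidableEq α] [DecidableEq β]
    (ρ : Equiv.Perm α) (hρ4 : ρ ^ 4 = 1) (c : α → β) :
    Nat.card {d : α → β // ∃ k : ℕ, d = c ∘ ⇑(ρ ^ k)} =
      if c ∘ ⇑ρ = c then 1 else if c ∘ ⇑(ρ ^ 2) = c then 2 else 4 := by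
  classical
  set g : ℕ → (α → β) := fun k => c ∘ ⇑(ρ ^ k) with hg_def
  have hg : ∀ a b : ℕ, g (a + b) = g a ∘ ⇑(ρ ^ b) := by
    intro a b; funext x
    simp [hg_def, pow_add, Equiv.Perm.mul_apply, Function.comp]
  have hpowmod : ∀ k : ℕ, ρ ^ k = ρ ^ (k % 4) := by
    intro k
    conv_lhs => rw [← Nat.div_add_mod k 4]
    rw [pow_add, pow_mul, hρ4, one_pow, one_mul]
  have hgmod : ∀ k : ℕ, g k = g (k % 4) := by
    intro k; simp only [hg_def]; rw [hpowmod k]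
  have hg0 : g 0 = c := by simp [hg_def]
  have hg1 : g 1 = c ∘ ⇑ρ := by simp [hg_def]
  set S : Finset (α → β) := (Finset.range 4).image g with hS_def
  have hsetS : {d : α → β | ∃ k : ℕ, d = c ∘ ⇑(ρ ^ k)} = ↑S := by
    ext d
    simp only [Set.mem_setOf_eq, hS_def, Finset.coe_image, Set.mem_image,
      Finset.coe_range, Set.mem_Iio]
    constructor
    · rintro ⟨k, rfl⟩
      exact ⟨k % 4, Nat.mod_lt k (by norm_num), (hgmod k).symm⟩
    · rintro ⟨k, _, rfl⟩
      exact ⟨k, rfl⟩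
  have hcard : Nat.card {d : α → β // ∃ k : ℕ, d = c ∘ ⇑(ρ ^ k)} = S.card := by
    have h1 : Nat.card {d : α → β // ∃ k : ℕ, d = c ∘ ⇑(ρ ^ k)}
        = Set.ncard {d : α → β | ∃ k : ℕ, d = c ∘ ⇑(ρ ^ k)} :=
      Nat.card_coe_set_eq _
    rw [h1, hsetS, Set.ncard_coe_finset]
  rw [hcard]
  have hrange4 : Finset.range 4 = ({0, 1, 2, 3} : Finset ℕ) := by decide
  by_cases h1 : c ∘ ⇑ρ = c
  · have hall : ∀ k : ℕ, g k = c := by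
      intro k
      induction k with
      | zero => exact hg0
      | succ k ih => rw [show k + 1 = k + 1 from rfl, hg k 1, ih, pow_one, h1]
    have : S = {c} := by
      ext d
      simp only [hS_def, Finset.mem_image, Finset.mem_range, Finset.mem_singleton]
      constructor
      · rintro ⟨k, _, rfl⟩; exact hall k
      · rintro rfl; exact ⟨0, by norm_num, hg0⟩
    rw [this, if_pos h1, Finset.card_singleton]
  · rw [if_neg h1]
    by_cases h2 : c ∘ ⇑(ρ ^ 2) = c
    · have hg2 : g 2 = c := h2
      have hg3 : g 3 = c ∘ ⇑ρ := by
        have := hg 2 1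
        rw [hg2, pow_one] at this
        exact this
      have hSeq : S = {c, c ∘ ⇑ρ} := by
        ext d
        simp only [hS_def, Finset.mem_image, Finset.mem_range, Finset.mem_insert,
          Finset.mem_singleton]
        constructor
        · rintro ⟨k, hk, rfl⟩
          interval_cases k
          · exact Or.inl hg0
          · exact Or.inr hg1
          · exact Or.inl hg2
          · exact Or.inr hg3
        · rintro (rfl | rfl)
          · exact ⟨0, by norm_num, hg0⟩
          · exact ⟨1, by norm_num, hg1⟩
      rw [hSeq, if_pos h2, Finset.card_pair (fun h => h1 h.symm)]
    · rw [if_neg h2]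
      have key : ∀ m : ℕ, 0 < m → m < 4 → g m ≠ c := by
        intro m hm0 hm4 hgm
        interval_cases m
        · exact h1 hgm
        · exact h2 hgm
        · -- g 3 = c : then g 6 = g 3 ∘ ρ^3 = c ∘ ρ^3 = g 3 = c, but g 6 = g 2
          have h6 : g 6 = c := by
            have := hg 3 3
            rw [hgm] at this
            rw [this]
            exact hgm
          have : g 2 = c := by rw [← h6]; exact (hgmod 6).symm
          exact h2 this
      have hinj : Set.InjOn g ↑(Finset.range 4) := by
        intro i hi j hj hij
        simp only [Finset.coe_range, Set.mem_Iio] at hi hj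
        by_contra hne
        have cancel : ∀ a b : ℕ, b < a → a < 4 → g b = g a → False := by
          intro a b hba ha4 heq
          have h1' : g a = g (a - b) ∘ ⇑(ρ ^ b) := by
            have := hg (a - b) b
            rw [Nat.sub_add_cancel hba.le] at this
            exact this
          have h2' : g b = c ∘ ⇑(ρ ^ b) := rfl
          have hinj' : Function.Injective fun f : α → β => f ∘ ⇑(ρ ^ b) :=
            fun f f' hff => by
              funext x
              have := congrFun hff ((ρ ^ b)⁻¹ x)
              simpa using this
          have : c = g (a - b) := hinj' (h2' ▸ heq ▸ h1' ▸ rfl : c ∘ ⇑(ρ ^ b) = g (a - b) ∘ ⇑(ρ ^ b))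
          exact key (a - b) (by omega) (by omega) this.symm
        rcases Nat.lt_or_ge i j with h | h
        · exact cancel j i h hj hij
        · exact cancel i j (by omega) hi hij.symm
      rw [hS_def, Finset.card_image_of_injOn hinj, Finset.card_range]

/-- Entropy of the image IMG of a uniformly random edge coloring of the `n×n`
grid under rotations of the board: writing `H(IMG) = E[-log₂ P(class of c)]`,
it equals `2n(n+1)·log₂ q − 2 + q^{-n(n+1)} + q^{-3n(n+1)/2}`. Here `ρ` is the
90° rotation acting on the `2n(n+1)` edges (order 4, all orbits of size 4), and
the class of `c` is `{c ∘ ρ^k : k}`. -/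
theorem entropy_IMG (n q : ℕ) (hn : 1 ≤ n) (hq : 2 ≤ q)
    (ρ : Equiv.Perm (Fin (2 * n * (n + 1))))
    (hρ4 : ρ ^ 4 = 1) (hρ2 : ∀ e, (ρ ^ 2) e ≠ e) :
    ∑ c : Fin (2 * n * (n + 1)) → Fin q,
      ((q : ℝ) ^ (2 * n * (n + 1)))⁻¹ *
        (- Real.logb 2
          ((Nat.card {d : Fin (2 * n * (n + 1)) → Fin q //
              ∃ k : ℕ, d = c ∘ ⇑(ρ ^ k)} : ℝ) / (q : ℝ) ^ (2 * n * (n + 1))))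
      = 2 * n * (n + 1) * Real.logb 2 q - 2
          + ((q : ℝ) ^ (n * (n + 1)))⁻¹ + ((q : ℝ) ^ (3 * n * (n + 1) / 2))⁻¹ := by
  classical
  have hq0 : (0:ℝ) < (q:ℝ) := by exact_mod_cast (by omega : 0 < q)
  have hqN : (0:ℝ) < (q:ℝ) ^ (2 * n * (n + 1)) := pow_pos hq0 _
  -- freeness facts
  have hfree4 : ∀ (x : Fin (2 * n * (n + 1))) (j : ℕ), 0 < j → j < 4 → (ρ ^ j) x ≠ x := by
    intro x j hj0 hj4 hx
    interval_cases j
    · rw [pow_one] at hx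
      exact hρ2 x (by rw [pow_two, Equiv.Perm.mul_apply, hx, hx])
    · exact hρ2 x hx
    · have hρx : ρ x = x := by
        have h4 : (ρ ^ 4) x = x := by rw [hρ4]; rfl
        calc ρ x = ρ ((ρ ^ 3) x) := by rw [hx]
        _ = (ρ ^ 4) x := by rw [pow_succ' ρ 3, Equiv.Perm.mul_apply]
        _ = x := h4
      exact hρ2 x (by rw [pow_two, Equiv.Perm.mul_apply, hρx, hρx])
  have hfree2 : ∀ (x : Fin (2 * n * (n + 1))) (j : ℕ), 0 < j → j < 2 → ((ρ ^ 2) ^ j) x ≠ x := by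
    intro x j hj0 hj2 hx
    interval_cases j
    rw [pow_one] at hx
    exact hρ2 x hx
  have hsq : (ρ ^ 2) ^ 2 = 1 := by rw [← pow_mul]; exact hρ4
  -- counts of symmetric colorings
  obtain ⟨t2, ht2a, ht2b⟩ :=
    fixed_count (α := Fin (2 * n * (n + 1))) (ρ ^ 2) 2 q (by norm_num) hsq hfree2
  obtain ⟨t4, ht4a, ht4b⟩ :=
    fixed_count (α := Fin (2 * n * (n + 1))) ρ 4 q (by norm_num) hρ4 hfree4
  rw [Fintype.card_fin] at ht2a ht4a
  have ht2 : t2 = n * (n + 1) := by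
    have h : 2 * (n * (n + 1)) = 2 * t2 := by rw [← ht2a]; ring
    omega
  have hnn : n * (n + 1) = 2 * t4 := by
    have h : 2 * (n * (n + 1)) = 4 * t4 := by rw [← ht4a]; ring
    omega
  -- filter cardinalities
  have hA : ((Finset.univ.filter fun c : Fin (2 * n * (n + 1)) → Fin q =>
      c ∘ ⇑ρ = c).card : ℝ) = (q:ℝ) ^ t4 := by
    rw [← Fintype.card_subtype, ← Nat.card_eq_fintype_card, ht4b]
    push_cast; ring
  have hB : ((Finset.univ.filter fun c : Fin (2 * n * (n + 1)) → Fin q =>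
      c ∘ ⇑(ρ ^ 2) = c).card : ℝ) = (q:ℝ) ^ (n * (n + 1)) := by
    rw [← Fintype.card_subtype, ← Nat.card_eq_fintype_card, ht2b, ← ht2]
    push_cast; ring
  -- per-coloring log computation
  have hstep : ∀ m : ℕ, m ≠ 0 →
      - Real.logb 2 ((m:ℝ) / (q:ℝ) ^ (2 * n * (n + 1)))
        = ((2 * n * (n + 1) : ℕ) : ℝ) * Real.logb 2 (q:ℝ) - Real.logb 2 (m:ℝ) := by
    intro m hm
    rw [Real.logb_div (Nat.cast_ne_zero.mpr hm) hqN.ne', Real.logb_pow]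
    ring
  have hlogb2 : Real.logb 2 (2:ℝ) = 1 := Real.logb_self_eq_one (by norm_num)
  have hlogb4 : Real.logb 2 (4:ℝ) = 2 := by
    rw [show (4:ℝ) = 2 ^ (2:ℕ) by norm_num, Real.logb_pow, hlogb2]; norm_num
  have hlog : ∀ c : Fin (2 * n * (n + 1)) → Fin q,
      - Real.logb 2
          ((Nat.card {d : Fin (2 * n * (n + 1)) → Fin q //
              ∃ k : ℕ, d = c ∘ ⇑(ρ ^ k)} : ℝ) / (q : ℝ) ^ (2 * n * (n + 1)))
        = ((2 * n * (n + 1) : ℕ) : ℝ) * Real.logb 2 (q:ℝ)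
          - (2 - (if c ∘ ⇑(ρ ^ 2) = c then (1:ℝ) else 0)
               - (if c ∘ ⇑ρ = c then (1:ℝ) else 0)) := by
    intro c
    rw [orbit_card ρ hρ4 c]
    by_cases h1 : c ∘ ⇑ρ = c
    · have h2 : c ∘ ⇑(ρ ^ 2) = c := by
        rw [pow_two]
        funext x
        calc c ((ρ * ρ) x) = c (ρ (ρ x)) := by rw [Equiv.Perm.mul_apply]
        _ = c (ρ x) := congrFun h1 (ρ x)
        _ = c x := congrFun h1 x
      simp only [if_pos h1, if_pos h2]
      rw [hstep 1 one_ne_zero]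
      norm_num [Real.logb_one]
    · by_cases h2 : c ∘ ⇑(ρ ^ 2) = c
      · simp only [if_neg h1, if_pos h2]
        rw [hstep 2 two_ne_zero]
        push_cast
        rw [hlogb2]; ring
      · simp only [if_neg h1, if_neg h2]
        rw [hstep 4 (by norm_num)]
        push_cast
        rw [hlogb4]; ring
  -- rewrite the sum
  rw [Finset.sum_congr rfl (fun c _ => by rw [hlog c])]
  have hsplit : ∀ c : Fin (2 * n * (n + 1)) → Fin q,
      ((q : ℝ) ^ (2 * n * (n + 1)))⁻¹ *
        (((2 * n * (n + 1) : ℕ) : ℝ) * Real.logb 2 (q:ℝ)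
          - (2 - (if c ∘ ⇑(ρ ^ 2) = c then (1:ℝ) else 0)
               - (if c ∘ ⇑ρ = c then (1:ℝ) else 0)))
      = ((q : ℝ) ^ (2 * n * (n + 1)))⁻¹ *
          (((2 * n * (n + 1) : ℕ) : ℝ) * Real.logb 2 (q:ℝ))
        - ((q : ℝ) ^ (2 * n * (n + 1)))⁻¹ *
          (2 - (if c ∘ ⇑(ρ ^ 2) = c then (1:ℝ) else 0)
             - (if c ∘ ⇑ρ = c then (1:ℝ) else 0)) := fun c => by ring
  rw [Finset.sum_congr rfl (fun c _ => hsplit c), Finset.sum_sub_distrib,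
    Finset.sum_const, ← Finset.mul_sum]
  have hsum2 : ∑ c : Fin (2 * n * (n + 1)) → Fin q,
      (2 - (if c ∘ ⇑(ρ ^ 2) = c then (1:ℝ) else 0)
         - (if c ∘ ⇑ρ = c then (1:ℝ) else 0))
      = 2 * (q:ℝ) ^ (2 * n * (n + 1)) - (q:ℝ) ^ (n * (n + 1)) - (q:ℝ) ^ t4 := by
    rw [Finset.sum_sub_distrib, Finset.sum_sub_distrib, Finset.sum_boole, Finset.sum_boole,
      Finset.sum_const, Finset.card_univ, Fintype.card_fun, Fintype.card_fin, Fintype.card_fin,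
      hA, hB]
    push_cast
    ring
  rw [hsum2, Finset.card_univ, Fintype.card_fun, Fintype.card_fin, Fintype.card_fin]
  -- final arithmetic
  have hNexp : 2 * n * (n + 1) = t4 * 4 := by omega
  have h2exp : n * (n + 1) = t4 * 2 := by omega
  have h3exp : 3 * n * (n + 1) / 2 = t4 * 3 := by
    have h6 : 3 * n * (n + 1) = 6 * t4 := by
      have h : 2 * (3 * n * (n + 1)) = 3 * (2 * n * (n + 1)) := by ring
      rw [ht4a] at h
      omega
    omega
  have hcast : ((2 * n * (n + 1) : ℕ) : ℝ) * Real.logb 2 (q:ℝ)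
      = 2 * (n:ℝ) * ((n:ℝ) + 1) * Real.logb 2 (q:ℝ) := by push_cast; ring
  rw [hcast, nsmul_eq_mul]
  push_cast
  rw [hNexp, h2exp, h3exp]
  simp only [pow_mul]
  set y : ℝ := (q:ℝ) ^ t4 with hy_def
  have hy : 0 < y := pow_pos hq0 _
  have hyne : y ≠ 0 := hy.ne'
  field_simp
  ring
end

section
/- With the setup of the random n×n puzzle with q colors, for each piece type J, P(X_J ≥ 2) ≤ C·(n⁴·q^{-8} + n²·q^{-7}) for an absolute constant C. -/
open Finset

/-! If two distinct squares both have type `J`, we get an ordered pair of distinct squares of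
type `J`, so the probability is at most the sum over such pairs. When the two squares together
carry `k` distinct edges, both are of type `J` with probability at most `|J|² / q^k`; here `k = 8`
for the at most `n⁴` edge-disjoint pairs and `k ≥ 7` for the at most `4n²` pairs sharing an
edge. -/

theorem card_filter_two_le_card_le_sum_offDiag {α β : Type*} [Fintype α] [Fintype β]
    [DecidableEq β] (T : β → α → Prop) [∀ b a, Decidable (T b a)] :
    #{a | 2 ≤ #{b | T b a}}
      ≤ ∑ p ∈ (univ : Finset β).offDiag, #{a | T p.1 a ∧ T p.2 a} := by
  have hpair (a) (ha : 2 ≤ #{b | T b a}) :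
      1 ≤ #{p ∈ (univ : Finset β).offDiag | T p.1 a ∧ T p.2 a} := by
    obtain ⟨s, hs, t, ht, hst⟩ := one_lt_card.1 ha
    exact card_pos.2 ⟨(s, t), by simp_all⟩
  calc #{a | 2 ≤ #{b | T b a}}
      ≤ ∑ a, #{p ∈ (univ : Finset β).offDiag | T p.1 a ∧ T p.2 a} := by
        rw [card_eq_sum_ones, sum_filter]
        exact sum_le_sum fun a _ => by split_ifs with ha; exacts [hpair a ha, Nat.zero_le _]
    _ = _ := by simp only [card_filter]; exact sum_comm

theorem card_filter_prod_le_mul_card {β : Type*} [Fintype β] (R : β → β → Prop)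
    [DecidableRel R] {d : ℕ} (hR : ∀ s, #{t | R s t} ≤ d) :
    #{p : β × β | R p.1 p.2} ≤ d * Fintype.card β := by
  rw [card_filter, Fintype.sum_prod_type]
  simpa [← card_filter, mul_comm] using sum_le_card_nsmul univ _ d fun s _ => hR s

theorem card_offDiag_filter_not_disjoint_le {β E : Type*} [Fintype β] [DecidableEq β]
    [DecidableEq E] (f : β → Finset E) {d : ℕ}
    (hf : ∀ s, #{t | t ≠ s ∧ ¬Disjoint (f s) (f t)} ≤ d) :
    #{p ∈ (univ : Finset β).offDiag | ¬Disjoint (f p.1) (f p.2)} ≤ d * Fintype.card β :=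
  (card_le_card fun p hp => by simp_all [eq_comm]).trans
    (card_filter_prod_le_mul_card (fun s t => t ≠ s ∧ ¬Disjoint (f s) (f t)) hf)

theorem sum_le_mul_add_mul_of_le {ι R : Type*} [Semiring R] [PartialOrder R]
    [IsOrderedRing R] {s : Finset ι} (P : ι → Prop) [DecidablePred P] {g : ι → R} {a b : R}
    {l m : ℕ} (ha₀ : 0 ≤ a) (hb₀ : 0 ≤ b) (ha : ∀ i ∈ s, P i → g i ≤ a)
    (hb : ∀ i ∈ s, ¬P i → g i ≤ b)
    (hl : #{i ∈ s | P i} ≤ l) (hm : #{i ∈ s | ¬P i} ≤ m) :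
    ∑ i ∈ s, g i ≤ l * a + m * b := by
  have bound (Q : ι → Prop) [DecidablePred Q] {c : R} {k : ℕ} (hc₀ : 0 ≤ c)
      (hc : ∀ i ∈ s, Q i → g i ≤ c) (hk : #{i ∈ s | Q i} ≤ k) :
      ∑ i ∈ s with Q i, g i ≤ k * c :=
    (sum_le_card_nsmul _ _ c fun i hi => hc i (mem_filter.1 hi).1 (mem_filter.1 hi).2).trans
      (by rw [nsmul_eq_mul]; gcongr)
  rw [← sum_filter_add_sum_filter_not s P]
  exact add_le_add (bound P ha₀ ha hl) (bound _ hb₀ hb hm)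

theorem card_filter_comp_mem_mul_pow_le {ι κ E α : Type*} [Fintype ι] [Fintype κ]
    [Fintype E] [DecidableEq E] [Fintype α] [DecidableEq α] (a : ι → E) (b : κ → E)
    (J : Finset (ι → α)) (K : Finset (κ → α)) :
    #{c : E → α | (fun i => c (a i)) ∈ J ∧ (fun i => c (b i)) ∈ K}
        * Fintype.card α ^ #(image a univ ∪ image b univ)
      ≤ #J * #K * Fintype.card α ^ Fintype.card E := by
  set U := image a univ ∪ image b univ
  have hinj : Function.Injective fun c : E → α =>
      ((fun i => c (a i), fun i => c (b i), fun e : (Uᶜ : Finset E) => c e) :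
        (ι → α) × (κ → α) × ((Uᶜ : Finset E) → α)) := by
    intro c₁ c₂ h
    simp only [Prod.mk.injEq, funext_iff] at h
    obtain ⟨ha, hb, hU⟩ := h
    funext e
    by_cases he : e ∈ U
    · rcases mem_union.1 he with he | he <;> obtain ⟨i, -, rfl⟩ := mem_image.1 he
      exacts [ha i, hb i]
    · exact hU ⟨e, mem_compl.2 he⟩
  calc _ ≤ #(J ×ˢ K ×ˢ (univ : Finset ((Uᶜ : Finset E) → α)))
        * Fintype.card α ^ #U := by
        gcongr
        exact card_le_card_of_injOn _ (fun c hc => by simp_all) hinj.injOn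
    _ = _ := by
        simp only [card_product, card_univ, Fintype.card_fun, Fintype.card_coe]
        rw [mul_assoc, mul_assoc, ← pow_add, card_compl_add_card, mul_assoc]

theorem card_filter_comp_mem_div_pow_le {ι κ E α : Type*} [Fintype ι] [Fintype κ]
    [Fintype E] [DecidableEq E] [Fintype α] [DecidableEq α] [Nonempty α] (a : ι → E)
    (b : κ → E) (J : Finset (ι → α)) (K : Finset (κ → α)) {k : ℕ}
    (hk : k ≤ #(image a univ ∪ image b univ)) :
    (#{c : E → α | (fun i => c (a i)) ∈ J ∧ (fun i => c (b i)) ∈ K} : ℝ)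
        / Fintype.card α ^ Fintype.card E
      ≤ #J * #K / Fintype.card α ^ k := by
  have hα : 1 ≤ Fintype.card α := Fintype.card_pos
  rw [div_le_div_iff₀ (by positivity) (by positivity)]
  exact_mod_cast (Nat.mul_le_mul_left _ (Nat.pow_le_pow_right hα hk)).trans
    (card_filter_comp_mem_mul_pow_le a b J K)

/-- For the random `n×n` puzzle with `q` colors, for each piece type `J` (a
rotation class of `4`-tuples of colors, of size at most `4`),
`P(X_J ≥ 2) ≤ C·(n⁴·q⁻⁸ + n²·q⁻⁷)` for an absolute constant `C`. Here distinct
squares share at most one edge, and each square shares edges with at most four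
other squares. -/
theorem prob_duplicate_piece_bound :
    ∃ C : ℝ, 0 < C ∧
      ∀ (n q : ℕ), 1 ≤ q →
      ∀ {E : Type} [Fintype E] [DecidableEq E]
        (ed : Fin n × Fin n → Fin 4 → E),
        (∀ s, Function.Injective (ed s)) →
        (∀ s t : Fin n × Fin n, s ≠ t →
          ((Finset.image (ed s) Finset.univ) ∩
            (Finset.image (ed t) Finset.univ)).card ≤ 1) →
        (∀ s : Fin n × Fin n,
          (Finset.univ.filter (fun t : Fin n × Fin n => t ≠ s ∧
            ¬ Disjoint (Finset.image (ed s) Finset.univ)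
                (Finset.image (ed t) Finset.univ))).card ≤ 4) →
        ∀ J : Finset (Fin 4 → Fin q),
          (∀ c ∈ J, (fun i => c (i + 1)) ∈ J) → J.card ≤ 4 →
          (Nat.card {c : E → Fin q //
              2 ≤ (Finset.univ.filter
                (fun s : Fin n × Fin n => (fun i => c (ed s i)) ∈ J)).card} : ℝ)
            / (q : ℝ) ^ (Fintype.card E)
          ≤ C * ((n : ℝ) ^ 4 * ((q : ℝ) ^ 8)⁻¹ + (n : ℝ) ^ 2 * ((q : ℝ) ^ 7)⁻¹) := by
  refine ⟨64, by norm_num, fun n q hq E _ _ ed hinj hshare hdeg J _ hJ => ?_⟩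
  have : Nonempty (Fin q) := Fin.pos_iff_nonempty.1 hq
  set edges := fun s => image (ed s) univ
  have hcard (s) : #(edges s) = 4 := by simp [edges, card_image_of_injective _ (hinj s)]
  have hseven (p) (hp : p ∈ univ.offDiag) : 7 ≤ #(edges p.1 ∪ edges p.2) := by
    have hunion := card_union_add_card_inter (edges p.1) (edges p.2)
    have hinter : #(edges p.1 ∩ edges p.2) ≤ 1 := hshare p.1 p.2 (mem_offDiag.1 hp).2.2
    rw [hcard, hcard] at hunion
    omega
  set prob : (Fin n × Fin n) × (Fin n × Fin n) → ℝ := fun p =>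
    #{c : E → Fin q | (fun i => c (ed p.1 i)) ∈ J ∧ (fun i => c (ed p.2 i)) ∈ J}
      / (q : ℝ) ^ Fintype.card E
  have hprob (p) {k : ℕ} (hk : k ≤ #(edges p.1 ∪ edges p.2)) :
      prob p ≤ 16 * ((q : ℝ) ^ k)⁻¹ := by
    have hJ' : (#J : ℝ) ≤ 4 := by exact_mod_cast hJ
    calc prob p ≤ #J * #J / (q : ℝ) ^ k := by
          simpa using card_filter_comp_mem_div_pow_le (ed p.1) (ed p.2) J J hk
      _ ≤ 16 * ((q : ℝ) ^ k)⁻¹ := by rw [div_eq_mul_inv]; gcongr; nlinarith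
  calc _ ≤ ∑ p ∈ univ.offDiag, prob p := by
        rw [Nat.card_eq_fintype_card, Fintype.card_subtype, ← sum_div]
        gcongr
        exact_mod_cast card_filter_two_le_card_le_sum_offDiag
          fun s (c : E → Fin q) => (fun i => c (ed s i)) ∈ J
    _ ≤ (n ^ 4 : ℕ) * (16 * ((q : ℝ) ^ 8)⁻¹)
          + (4 * n ^ 2 : ℕ) * (16 * ((q : ℝ) ^ 7)⁻¹) :=
        sum_le_mul_add_mul_of_le (fun p => Disjoint (edges p.1) (edges p.2))
          (by positivity) (by positivity)
          (fun p _ hp => hprob p (by rw [card_union_of_disjoint hp, hcard, hcard]))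
          (fun p hp _ => hprob p (hseven p hp))
          ((card_le_univ _).trans_eq
            (by simp only [Fintype.card_prod, Fintype.card_fin]; ring))
          (by simpa [sq] using card_offDiag_filter_not_disjoint_le edges hdeg)
    _ ≤ 64 * ((n : ℝ) ^ 4 * ((q : ℝ) ^ 8)⁻¹ + (n : ℝ) ^ 2 * ((q : ℝ) ^ 7)⁻¹) := by
        push_cast
        nlinarith [show (0 : ℝ) ≤ n ^ 4 * ((q : ℝ) ^ 8)⁻¹ by positivity]
end
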